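/- Let T : [0,1] → [0,1] be a piecewise-continuous interval transformation: there are partitions 0 = x₀ < x₁ < … < x_n = 1 and 0 = y₀ < y₁ < … < y_n = 1 and a permutation σ of {1, …, n} such that T maps each open interval (x_{i−1}, x_i) continuously, bijectively and monotonically onto (y_{σ(i)−1}, y_{σ(i)}). Let W : ℕ → {1, …, n} be a uniformly recurrent word which is the evolution of a point x₀* whose orbit avoids all partition points, i.e. W(m) = i iff T^m(x₀*) ∈ (x_{i−1}, x_i). Then there exists an infinite word W' equivalent to W (F(W') = F(W)) which is generated by an interval exchange transformation: there exist an interval exchange transformation S of [0,1) (a bijection that is an isometry on each interval of a finite partition of [0,1) into half-open intervals), characteristic sets V₁, …, V_n partitioning [0,1), each a finite union of intervals, and a point y ∈ [0,1) such that W'(m) = i iff S^m(y) ∈ V_i for all m ≥ 0. -/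

import Mathlib

/-- The finite word `u` occurs in the infinite word `W` at position `i`. -/
def occursAt {A : Type*} (W : ℕ → A) (u : List A) (i : ℕ) : Prop :=
  u = (List.range u.length).map (fun j => W (i + j))

/-- `u` is a factor (subword) of the infinite word `W`. -/
def IsFactor {A : Type*} (W : ℕ → A) (u : List A) : Prop :=
  ∃ i, occursAt W u i

/-- The set of factors of `W`. -/
def Factors {A : Type*} (W : ℕ → A) : Set (List A) :=
  {u | IsFactor W u}

/-- `W` is uniformly recurrent. -/
def UniformlyRecurrent {A : Type*} (W : ℕ → A) : Prop :=
  ∀ v, IsFactor W v → ∃ N : ℕ, ∀ u, IsFactor W u → u.length = N → v <:+: u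

/-!
Along a free ultrafilter, the orbit `o m = T^[m] p` has visit frequencies that are finitely
additive and shift-invariant. Every orbit point lies in a branch and `T` is injective on branches,
so `T` preserves the frequency of any set inside a branch. In the coordinate `freqBelow o t`, the
frequency of `(-∞, t)`, each branch of `T` therefore acts as `s ↦ c + s` or `s ↦ c - s`. On two
copies of `[0, 1]`, the second one mirrored, both kinds of maps are translations; this gives an
interval exchange `S` of `[0, 1)` whose characteristic sets are the images of the branches.

A factor of the word coded by the `S`-orbit of `0` is seen by an interval of positive frequency
whose points all follow the same itinerary under `T`; the orbit of `p` enters that interval, so the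
factor occurs in `W`. Uniform recurrence of `W` gives the reverse inclusion.
-/

open Filter Set Topology

section Words

variable {α ι : Type*}

def FollowsItinerary (f : α → α) (P : ι → Set α) : List ι → α → Prop
  | [], _ => True
  | i :: v, z => z ∈ P i ∧ FollowsItinerary f P v (f z)

lemma occursAt_cons {W : ℕ → ι} {a : ι} {v : List ι} {m : ℕ} :
    occursAt W (a :: v) m ↔ W m = a ∧ occursAt W v (m + 1) := by
  simp [occursAt, List.range_succ_eq_map, List.map_map, Function.comp_def, eq_comm, add_assoc,
    add_comm 1]

lemma occursAt_iff_followsItinerary {W : ℕ → ι} {f : α → α} {P : ι → Set α} {q : α}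
    (hW : ∀ m i, W m = i ↔ f^[m] q ∈ P i) (v : List ι) (m : ℕ) :
    occursAt W v m ↔ FollowsItinerary f P v (f^[m] q) := by
  induction v generalizing m with
  | nil => simp [occursAt, FollowsItinerary]
  | cons i v ih =>
    rw [occursAt_cons, hW, ih, FollowsItinerary, ← Function.iterate_succ_apply' f m q]

lemma isFactor_iff_exists_followsItinerary {W : ℕ → ι} {f : α → α} {P : ι → Set α} {q : α}
    (hW : ∀ m i, W m = i ↔ f^[m] q ∈ P i) (v : List ι) :
    IsFactor W v ↔ ∃ m, FollowsItinerary f P v (f^[m] q) :=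
  exists_congr fun m => occursAt_iff_followsItinerary hW v m

lemma isFactor_of_infix {W : ℕ → ι} {u v : List ι} (h : v <:+: u) (hu : IsFactor W u) :
    IsFactor W v := by
  obtain ⟨s, t, rfl⟩ := h
  obtain ⟨i, hi⟩ := hu
  refine ⟨i + s.length, List.ext_getElem (by simp) fun j hj _ => ?_⟩
  have := congrArg (·[s.length + j]?) hi
  have hlt : s.length + j < s.length + (v.length + t.length) := by omega
  simp [List.getElem?_append_right, List.getElem?_append_left, List.getElem?_range hlt, hj] at this
  simp [← this, add_assoc]

lemma exists_coding {f : α → α} {s : Set α} (hf : MapsTo f s s) {q : α} (hq : q ∈ s)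
    {P : ι → Set α} (hP : ∀ z ∈ s, ∃! i, z ∈ P i) :
    ∃ W : ℕ → ι, ∀ m i, W m = i ↔ f^[m] q ∈ P i := by
  choose W hW using fun m => (hP _ (hf.iterate m hq)).exists
  exact ⟨W, fun m i => ⟨by rintro rfl; exact hW m, (hP _ (hf.iterate m hq)).unique (hW m)⟩⟩

lemma factors_eq_of_subset {W W' : ℕ → ι} (hUR : UniformlyRecurrent W)
    (h : Factors W' ⊆ Factors W) : Factors W' = Factors W := by
  refine h.antisymm fun u hu => ?_
  obtain ⟨N, hN⟩ := hUR u hu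
  have hpre : IsFactor W' ((List.range N).map W') := ⟨0, by simp [occursAt]⟩
  exact isFactor_of_infix (hN _ (h hpre) (by simp)) hpre

end Words

section UltraDensity

noncomputable def countRatio (A : Set ℕ) (N : ℕ) : ℝ :=
  (∑ k ∈ Finset.range N, A.indicator 1 k) / N

noncomputable def ultraDensity (A : Set ℕ) : ℝ :=
  (hyperfilter ℕ : Filter ℕ).limUnder (countRatio A)

lemma hyperfilter_le_atTop : (hyperfilter ℕ : Filter ℕ) ≤ atTop :=
  Nat.cofinite_eq_atTop ▸ hyperfilter_le_cofinite

lemma indicator_one_mem_Icc (A : Set ℕ) (k : ℕ) : A.indicator (1 : ℕ → ℝ) k ∈ Icc (0 : ℝ) 1 := by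
  by_cases hk : k ∈ A <;> simp [hk]

lemma countRatio_mem_Icc (A : Set ℕ) (N : ℕ) : countRatio A N ∈ Icc (0 : ℝ) 1 := by
  have hsum : ∑ k ∈ Finset.range N, A.indicator (1 : ℕ → ℝ) k ≤ N := by
    simpa using Finset.sum_le_sum fun k (_ : k ∈ Finset.range N) => (indicator_one_mem_Icc A k).2
  refine ⟨div_nonneg (Finset.sum_nonneg fun k _ => (indicator_one_mem_Icc A k).1) N.cast_nonneg,
    div_le_one_of_le₀ hsum N.cast_nonneg⟩

lemma tendsto_ultraDensity (A : Set ℕ) :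
    Tendsto (countRatio A) (hyperfilter ℕ) (𝓝 (ultraDensity A)) := by
  refine tendsto_nhds_limUnder ?_
  obtain ⟨L, -, hL⟩ := isCompact_Icc.ultrafilter_le_nhds ((hyperfilter ℕ).map (countRatio A))
    (le_principal_iff.2 (mem_map.2 (univ_mem' (countRatio_mem_Icc A))))
  exact ⟨L, hL⟩

lemma ultraDensity_eq_of_tendsto {A : Set ℕ} {L : ℝ}
    (h : Tendsto (countRatio A) (hyperfilter ℕ) (𝓝 L)) : ultraDensity A = L :=
  tendsto_nhds_unique (tendsto_ultraDensity A) h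

lemma ultraDensity_mono {A B : Set ℕ} (h : A ⊆ B) : ultraDensity A ≤ ultraDensity B := by
  refine le_of_tendsto_of_tendsto' (tendsto_ultraDensity A) (tendsto_ultraDensity B) fun N => ?_
  unfold countRatio
  gcongr
  simp

lemma ultraDensity_union {A B : Set ℕ} (h : Disjoint A B) :
    ultraDensity (A ∪ B) = ultraDensity A + ultraDensity B := by
  refine ultraDensity_eq_of_tendsto ?_
  convert (tendsto_ultraDensity A).add (tendsto_ultraDensity B) using 1
  ext N
  simp only [countRatio, ← add_div, ← Finset.sum_add_distrib,
    indicator_union_of_disjoint h]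

lemma ultraDensity_univ : ultraDensity univ = 1 := by
  refine ultraDensity_eq_of_tendsto (tendsto_const_nhds.congr' ?_)
  filter_upwards [hyperfilter_le_atTop (eventually_ge_atTop 1)] with N hN
  have : (N : ℝ) ≠ 0 := by positivity
  simp [countRatio, this]

lemma ultraDensity_empty : ultraDensity ∅ = 0 := by
  have h : countRatio ∅ = fun _ => 0 := by ext N; simp [countRatio]
  exact ultraDensity_eq_of_tendsto (h ▸ tendsto_const_nhds)

lemma ultraDensity_nonneg (A : Set ℕ) : 0 ≤ ultraDensity A :=
  ultraDensity_empty ▸ ultraDensity_mono (empty_subset A)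

lemma ultraDensity_le_one (A : Set ℕ) : ultraDensity A ≤ 1 :=
  ultraDensity_univ ▸ ultraDensity_mono (subset_univ A)

-- The two counts up to `N` differ by at most one, which is negligible relative to `N`.
lemma ultraDensity_preimage_succ (A : Set ℕ) : ultraDensity (Nat.succ ⁻¹' A) = ultraDensity A := by
  have hsum : ∀ N, |∑ k ∈ Finset.range N, (Nat.succ ⁻¹' A).indicator (1 : ℕ → ℝ) k -
      ∑ k ∈ Finset.range N, A.indicator 1 k| ≤ 1 := by
    intro N
    have h₁ := Finset.sum_range_succ' (A.indicator (1 : ℕ → ℝ)) N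
    have h₂ := Finset.sum_range_succ (A.indicator (1 : ℕ → ℝ)) N
    have h₀ := indicator_one_mem_Icc A 0
    have hN := indicator_one_mem_Icc A N
    have hshift : ∀ k, (Nat.succ ⁻¹' A).indicator (1 : ℕ → ℝ) k = A.indicator 1 (k + 1) :=
      fun k => rfl
    simp only [hshift]
    rw [abs_le]
    constructor <;> linarith [h₀.1, h₀.2, hN.1, hN.2]
  have hdiff : Tendsto (fun N => countRatio (Nat.succ ⁻¹' A) N - countRatio A N) atTop (𝓝 0) := by
    refine squeeze_zero_norm' ?_ tendsto_one_div_atTop_nhds_zero_nat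
    filter_upwards [eventually_ge_atTop 1] with N hN
    rw [countRatio, countRatio, ← sub_div, norm_div, Real.norm_natCast, Real.norm_eq_abs]
    exact div_le_div_of_nonneg_right (hsum N) N.cast_nonneg
  refine ultraDensity_eq_of_tendsto ?_
  simpa using (tendsto_ultraDensity A).add (hdiff.mono_left hyperfilter_le_atTop)

lemma nonempty_of_ultraDensity_pos {A : Set ℕ} (h : 0 < ultraDensity A) : A.Nonempty :=
  nonempty_iff_ne_empty.2 fun hA => by simp [hA, ultraDensity_empty] at h

end UltraDensity

section VisitFreq

variable (o : ℕ → ℝ)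

noncomputable def visitFreq (s : Set ℝ) : ℝ := ultraDensity (o ⁻¹' s)

noncomputable def freqBelow (t : ℝ) : ℝ := visitFreq o (Iio t)

variable {o}

lemma visitFreq_mono {s t : Set ℝ} (h : s ⊆ t) : visitFreq o s ≤ visitFreq o t :=
  ultraDensity_mono (preimage_mono h)

lemma visitFreq_union {s t : Set ℝ} (h : Disjoint s t) :
    visitFreq o (s ∪ t) = visitFreq o s + visitFreq o t :=
  ultraDensity_union (h.preimage o)

lemma visitFreq_shift (s : Set ℝ) : visitFreq (fun m => o (m + 1)) s = visitFreq o s :=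
  ultraDensity_preimage_succ (o ⁻¹' s)

lemma visitFreq_eq_zero_of_forall_succ_notMem {s : Set ℝ} (h : ∀ m, o (m + 1) ∉ s) :
    visitFreq o s = 0 := by
  rw [← visitFreq_shift, visitFreq, eq_empty_of_forall_notMem (s := (fun m => o (m + 1)) ⁻¹' s) h,
    ultraDensity_empty]

lemma visitFreq_eq_one_of_forall_succ_mem {s : Set ℝ} (h : ∀ m, o (m + 1) ∈ s) :
    visitFreq o s = 1 := by
  rw [← visitFreq_shift, visitFreq, eq_univ_of_forall (s := (fun m => o (m + 1)) ⁻¹' s) h,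
    ultraDensity_univ]

lemma freqBelow_mono : Monotone (freqBelow o) :=
  fun _ _ h => visitFreq_mono (Iio_subset_Iio h)

lemma freqBelow_mem_Icc (t : ℝ) : freqBelow o t ∈ Icc (0 : ℝ) 1 :=
  ⟨ultraDensity_nonneg _, ultraDensity_le_one _⟩

lemma visitFreq_Ioo {a b : ℝ} (ha : visitFreq o {a} = 0) (hab : a ≤ b) :
    visitFreq o (Ioo a b) = freqBelow o b - freqBelow o a := by
  rcases hab.eq_or_lt with rfl | hab
  · simp [visitFreq, ultraDensity_empty]
  have hb : Iio b = Iio a ∪ ({a} ∪ Ioo a b) := by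
    rw [singleton_union, Ioo_insert_left hab, Iio_union_Ico_eq_Iio hab.le]
  rw [freqBelow, hb, visitFreq_union, visitFreq_union, ha, freqBelow]
  · ring
  · simp
  · rw [singleton_union, Ioo_insert_left hab]
    exact disjoint_left.2 fun z hz hz' => not_le.2 hz hz'.1

lemma exists_mem_Ioo_of_freqBelow_lt {a b : ℝ} (ha : visitFreq o {a} = 0)
    (h : freqBelow o a < freqBelow o b) : ∃ m, o m ∈ Ioo a b := by
  have hab : a ≤ b := le_of_not_gt fun hba => h.not_ge (freqBelow_mono hba.le)
  have hpos : 0 < visitFreq o (Ioo a b) := by rw [visitFreq_Ioo ha hab]; linarith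
  exact nonempty_of_ultraDensity_pos hpos

end VisitFreq

section Pieces

variable {n : ℕ}

def piece (f : Fin (n + 1) → ℝ) (i : Fin n) : Set ℝ := Ioo (f i.castSucc) (f i.succ)

variable {f : Fin (n + 1) → ℝ}

lemma eq_of_mem_piece (hf : Monotone f) {z : ℝ} {i j : Fin n} (hi : z ∈ piece f i)
    (hj : z ∈ piece f j) : i = j := by
  by_contra hij
  rcases lt_or_gt_of_ne hij with h | h
  · exact (hi.2.trans_le (hf (Fin.succ_le_castSucc_iff.2 h))).not_gt hj.1
  · exact (hj.2.trans_le (hf (Fin.succ_le_castSucc_iff.2 h))).not_gt hi.1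

lemma ne_of_mem_piece (hf : Monotone f) {z : ℝ} {i : Fin n} (hz : z ∈ piece f i) (j : Fin (n + 1)) :
    z ≠ f j := by
  rintro rfl
  rcases le_or_gt j i.castSucc with h | h
  · exact (hf h).not_gt hz.1
  · exact (hf (Fin.castSucc_lt_iff_succ_le.1 h)).not_gt hz.2

lemma mem_Ioo_of_mem_piece (hf : Monotone f) {z : ℝ} {i : Fin n} (hz : z ∈ piece f i) :
    z ∈ Ioo (f 0) (f (Fin.last n)) :=
  ⟨(hf (Fin.zero_le _)).trans_lt hz.1, hz.2.trans_le (hf (Fin.le_last _))⟩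

variable {o : ℕ → ℝ} (hf : Monotone f) (ho : ∀ m, ∃ i, o (m + 1) ∈ piece f i)
include hf ho

lemma visitFreq_singleton_partition (j : Fin (n + 1)) : visitFreq o {f j} = 0 :=
  visitFreq_eq_zero_of_forall_succ_notMem fun m => by
    obtain ⟨i, hi⟩ := ho m
    exact ne_of_mem_piece hf hi j

lemma freqBelow_partition_zero : freqBelow o (f 0) = 0 :=
  visitFreq_eq_zero_of_forall_succ_notMem fun m => by
    obtain ⟨i, hi⟩ := ho m
    exact (mem_Ioo_of_mem_piece hf hi).1.not_gt

lemma freqBelow_partition_last : freqBelow o (f (Fin.last n)) = 1 :=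
  visitFreq_eq_one_of_forall_succ_mem fun m => by
    obtain ⟨i, hi⟩ := ho m
    exact (mem_Ioo_of_mem_piece hf hi).2

end Pieces

section Cut

variable {f : ℝ → ℝ} {a b c d : ℝ}

lemma exists_cut_of_strictMonoOn (hf : BijOn f (Ioo a b) (Ioo c d))
    (hm : StrictMonoOn f (Ioo a b)) (hab : a ≤ b) {A : ℝ} (hA : A ∈ Icc c d) :
    ∃ α ∈ Icc a b, (α ∈ Ioo a b → f α = A) ∧
      ∀ z ∈ Ioo a b, (z < α ↔ f z < A) ∧ (α < z ↔ A < f z) := by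
  rcases hA.1.eq_or_lt with rfl | hcA
  · refine ⟨a, left_mem_Icc.2 hab, fun h => (lt_irrefl a h.1).elim, fun z hz => ?_⟩
    have hfz := hf.mapsTo hz
    exact ⟨iff_of_false hz.1.not_gt hfz.1.not_gt, iff_of_true hz.1 hfz.1⟩
  rcases hA.2.eq_or_lt with rfl | hAd
  · refine ⟨b, right_mem_Icc.2 hab, fun h => (lt_irrefl b h.2).elim, fun z hz => ?_⟩
    have hfz := hf.mapsTo hz
    exact ⟨iff_of_true hz.2 hfz.2, iff_of_false hz.2.not_gt hfz.2.not_gt⟩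
  obtain ⟨α, hα, rfl⟩ := hf.surjOn ⟨hcA, hAd⟩
  exact ⟨α, Ioo_subset_Icc_self hα, fun _ => rfl,
    fun z hz => ⟨(hm.lt_iff_lt hz hα).symm, (hm.lt_iff_lt hα hz).symm⟩⟩

lemma exists_cut_of_strictAntiOn (hf : BijOn f (Ioo a b) (Ioo c d))
    (hm : StrictAntiOn f (Ioo a b)) (hab : a ≤ b) {A : ℝ} (hA : A ∈ Icc c d) :
    ∃ α ∈ Icc a b, (α ∈ Ioo a b → f α = A) ∧
      ∀ z ∈ Ioo a b, (z < α ↔ A < f z) ∧ (α < z ↔ f z < A) := by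
  have hneg : BijOn (fun z => -f z) (Ioo a b) (Ioo (-d) (-c)) :=
    (image_neg_Ioo c d ▸ neg_injective.injOn.bijOn_image).comp hf
  obtain ⟨α, hα, hfα, hcut⟩ :=
    exists_cut_of_strictMonoOn hneg hm.neg hab ⟨neg_le_neg hA.2, neg_le_neg hA.1⟩
  exact ⟨α, hα, fun h => neg_injective (hfα h), fun z hz => by simpa using hcut z hz⟩

end Cut

section Dynamics

variable {n : ℕ} {x y : Fin (n + 1) → ℝ} {σ : Equiv.Perm (Fin n)} {T : ℝ → ℝ} {o : ℕ → ℝ}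

lemma exists_mem_piece_succ (hT : ∀ i, BijOn T (piece x i) (piece y (σ i)))
    (hstep : ∀ m, o (m + 1) = T (o m)) (horb : ∀ m, ∃ i, o m ∈ piece x i) (m : ℕ) :
    ∃ i, o m ∈ piece x i ∧ o (m + 1) ∈ piece y (σ i) := by
  obtain ⟨i, hi⟩ := horb m
  exact ⟨i, hi, hstep m ▸ (hT i).mapsTo hi⟩

lemma succ_mem_piece_y (hT : ∀ i, BijOn T (piece x i) (piece y (σ i)))
    (hstep : ∀ m, o (m + 1) = T (o m)) (horb : ∀ m, ∃ i, o m ∈ piece x i) (m : ℕ) :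
    ∃ j, o (m + 1) ∈ piece y j := by
  obtain ⟨i, -, hi⟩ := exists_mem_piece_succ hT hstep horb m
  exact ⟨σ i, hi⟩

variable (hx : StrictMono x) (hy : StrictMono y) (hT : ∀ i, BijOn T (piece x i) (piece y (σ i)))
  (hstep : ∀ m, o (m + 1) = T (o m)) (horb : ∀ m, ∃ i, o m ∈ piece x i)
include hy hT hstep horb

-- `T` preserves the visit frequencies because the orbit can reach `T '' J` only through `J`.
lemma visitFreq_image {i : Fin n} {J : Set ℝ} (hJ : J ⊆ piece x i) :
    visitFreq o (T '' J) = visitFreq o J := by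
  rw [← visitFreq_shift]
  refine congrArg ultraDensity (Set.ext fun m => ⟨fun (hm : o (m + 1) ∈ T '' J) => ?_,
    fun (hm : o m ∈ J) => show o (m + 1) ∈ T '' J from hstep m ▸ mem_image_of_mem T hm⟩)
  obtain ⟨j, hj, hj'⟩ := exists_mem_piece_succ hT hstep horb m
  obtain ⟨z, hz, hzm⟩ := hm
  have hji : j = i :=
    σ.injective (eq_of_mem_piece hy.monotone hj' (hzm ▸ (hT i).mapsTo (hJ hz)))
  subst hji
  rw [hstep] at hzm
  show o m ∈ J
  exact (hT j).injOn (hJ hz) hj hzm ▸ hz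

lemma visitFreq_singleton_of_image {α A : ℝ} {i : Fin n} (hα : α ∈ piece x i) (hTα : T α = A)
    (hA : visitFreq o {A} = 0) : visitFreq o {α} = 0 := by
  rw [← visitFreq_image hy hT hstep horb (singleton_subset_iff.2 hα), image_singleton, hTα, hA]

lemma visitFreq_singleton_y (j : Fin (n + 1)) : visitFreq o {y j} = 0 :=
  visitFreq_singleton_partition hy.monotone (succ_mem_piece_y hT hstep horb) j

include hx in
lemma freqBelow_sub_of_cut_mono {i : Fin n} {α A : ℝ} (hα : α ∈ Icc (x i.castSucc) (x i.succ))
    (hA : A ∈ Icc (y (σ i).castSucc) (y (σ i).succ)) (hcut : ∀ z ∈ piece x i, z < α ↔ T z < A) :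
    freqBelow o A - freqBelow o (y (σ i).castSucc) =
      freqBelow o α - freqBelow o (x i.castSucc) := by
  have hJ : Ioo (x i.castSucc) α = piece x i ∩ T ⁻¹' Iio A := by
    ext z
    refine ⟨fun hz => ?_, fun hz => ⟨hz.1.1, (hcut z hz.1).2 hz.2⟩⟩
    have hz' : z ∈ piece x i := ⟨hz.1, hz.2.trans_le hα.2⟩
    exact ⟨hz', (hcut z hz').1 hz.2⟩
  have himage : T '' Ioo (x i.castSucc) α = Ioo (y (σ i).castSucc) A := by
    rw [hJ, image_inter_preimage, (hT i).image_eq, piece, Ioo_inter_Iio, min_eq_right hA.2]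
  rw [← visitFreq_Ioo (visitFreq_singleton_y hy hT hstep horb _) hA.1,
    ← visitFreq_Ioo (visitFreq_singleton_partition hx.monotone (fun m => horb (m + 1)) _) hα.1,
    ← himage, visitFreq_image hy hT hstep horb (hJ ▸ inter_subset_left)]

lemma freqBelow_sub_of_cut_anti {i : Fin n} {α A : ℝ} (hα : α ∈ Icc (x i.castSucc) (x i.succ))
    (hA : A ∈ Icc (y (σ i).castSucc) (y (σ i).succ)) (hα₀ : visitFreq o {α} = 0)
    (hcut : ∀ z ∈ piece x i, α < z ↔ T z < A) :
    freqBelow o A - freqBelow o (y (σ i).castSucc) = freqBelow o (x i.succ) - freqBelow o α := by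
  have hJ : Ioo α (x i.succ) = piece x i ∩ T ⁻¹' Iio A := by
    ext z
    refine ⟨fun hz => ?_, fun hz => ⟨(hcut z hz.1).2 hz.2, hz.1.2⟩⟩
    have hz' : z ∈ piece x i := ⟨hα.1.trans_lt hz.1, hz.2⟩
    exact ⟨hz', (hcut z hz').1 hz.1⟩
  have himage : T '' Ioo α (x i.succ) = Ioo (y (σ i).castSucc) A := by
    rw [hJ, image_inter_preimage, (hT i).image_eq, piece, Ioo_inter_Iio, min_eq_right hA.2]
  rw [← visitFreq_Ioo (visitFreq_singleton_y hy hT hstep horb _) hA.1, ← visitFreq_Ioo hα₀ hα.2,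
    ← himage, visitFreq_image hy hT hstep horb (hJ ▸ inter_subset_left)]

include hx in
lemma freqBelow_piece_sub (i : Fin n) :
    freqBelow o (y (σ i).succ) - freqBelow o (y (σ i).castSucc) =
      freqBelow o (x i.succ) - freqBelow o (x i.castSucc) :=
  freqBelow_sub_of_cut_mono hx hy hT hstep horb (right_mem_Icc.2 (hx Fin.castSucc_lt_succ).le)
    (right_mem_Icc.2 (hy Fin.castSucc_lt_succ).le) fun _ hz => iff_of_true hz.2 ((hT i).mapsTo hz).2

include hx in
lemma visitFreq_singleton_of_cut {i : Fin n} {α A : ℝ} (hα : α ∈ Icc (x i.castSucc) (x i.succ))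
    (hTα : α ∈ piece x i → T α = A) (hA : visitFreq o {A} = 0) : visitFreq o {α} = 0 := by
  have hx₀ := visitFreq_singleton_partition hx.monotone fun m => horb (m + 1)
  rcases hα.1.eq_or_lt with rfl | h₁
  · exact hx₀ _
  rcases hα.2.eq_or_lt with rfl | h₂
  · exact hx₀ _
  exact visitFreq_singleton_of_image hy hT hstep horb ⟨h₁, h₂⟩ (hTα ⟨h₁, h₂⟩) hA

include hx in
lemma exists_pullback_of_strictMonoOn {i : Fin n} (hm : StrictMonoOn T (piece x i)) {A : ℝ}
    (hA : A ∈ Icc (y (σ i).castSucc) (y (σ i).succ)) (hA₀ : visitFreq o {A} = 0) :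
    ∃ α ∈ Icc (x i.castSucc) (x i.succ), visitFreq o {α} = 0 ∧
      freqBelow o A =
        freqBelow o (y (σ i).castSucc) - freqBelow o (x i.castSucc) + freqBelow o α ∧
      ∀ z ∈ piece x i, (z < α → T z < A) ∧ (α < z → A < T z) := by
  obtain ⟨α, hα, hTα, hcut⟩ :=
    exists_cut_of_strictMonoOn (hT i) hm (hx Fin.castSucc_lt_succ).le hA
  have hG := freqBelow_sub_of_cut_mono hx hy hT hstep horb hα hA fun z hz => (hcut z hz).1
  exact ⟨α, hα, visitFreq_singleton_of_cut hx hy hT hstep horb hα hTα hA₀, by linarith,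
    fun z hz => ⟨(hcut z hz).1.1, (hcut z hz).2.1⟩⟩

include hx in
lemma exists_pullback_of_strictAntiOn {i : Fin n} (hm : StrictAntiOn T (piece x i)) {A : ℝ}
    (hA : A ∈ Icc (y (σ i).castSucc) (y (σ i).succ)) (hA₀ : visitFreq o {A} = 0) :
    ∃ α ∈ Icc (x i.castSucc) (x i.succ), visitFreq o {α} = 0 ∧
      freqBelow o A =
        freqBelow o (y (σ i).castSucc) + freqBelow o (x i.succ) - freqBelow o α ∧
      ∀ z ∈ piece x i, (z < α → A < T z) ∧ (α < z → T z < A) := by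
  obtain ⟨α, hα, hTα, hcut⟩ :=
    exists_cut_of_strictAntiOn (hT i) hm (hx Fin.castSucc_lt_succ).le hA
  have hα₀ := visitFreq_singleton_of_cut hx hy hT hstep horb hα hTα hA₀
  have hG := freqBelow_sub_of_cut_anti hy hT hstep horb hα hA hα₀ fun z hz => (hcut z hz).2
  exact ⟨α, hα, hα₀, by linarith, fun z hz => ⟨(hcut z hz).1.1, (hcut z hz).2.1⟩⟩

end Dynamics

lemma Fin.exists_castSucc_and_not_succ {n : ℕ} (P : Fin (n + 1) → Prop) (h0 : P 0)
    (hlast : ¬ P (Fin.last n)) : ∃ i : Fin n, P i.castSucc ∧ ¬ P i.succ := by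
  induction n with
  | zero => exact (hlast h0).elim
  | succ n ih =>
    by_cases h : P (Fin.last n).castSucc
    · exact ⟨Fin.last n, h, hlast⟩
    · obtain ⟨i, hi, hi'⟩ := ih (fun k => P k.castSucc) h0 h
      exact ⟨i.castSucc, hi, by rwa [← Fin.succ_castSucc] at hi'⟩

section DoubledCells

/-- `dcell true a b` is the interval `[a, b)` of `[0, 1]` scaled into `[0, 1/2)`, and
`dcell false a b` is its mirror image in `[1/2, 1)`. In the mirrored copy an
orientation-reversing map of `[0, 1]` becomes a translation. -/
def dcell : Bool → ℝ → ℝ → Set ℝ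
  | true, a, b => Ico (a / 2) (b / 2)
  | false, a, b => Ico (1 - b / 2) (1 - a / 2)

noncomputable def dshift : Bool → Bool → ℝ → ℝ
  | true, true, c => c / 2
  | true, false, c => -(c / 2)
  | false, true, c => 1 - c / 2
  | false, false, c => c / 2 - 1

-- Translating by `dshift o ε c` realises `s ↦ c + s` (if `o`) or `s ↦ c - s` (if `¬ o`).
lemma add_dshift_mem_dcell_iff (o ε : Bool) (c a b u : ℝ) :
    u + dshift o ε c ∈ dcell (cond o ε (!ε)) (cond o (c + a) (c - b)) (cond o (c + b) (c - a)) ↔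
      u ∈ dcell ε a b := by
  cases o <;> cases ε <;>
    simp only [dcell, dshift, cond, Bool.not_true, Bool.not_false, mem_Ico] <;> constructor <;>
    rintro ⟨h₁, h₂⟩ <;> constructor <;> linarith

variable {ε ε' : Bool} {a b a' b' u : ℝ}

lemma lt_of_mem_dcell (h : u ∈ dcell ε a b) : a < b := by
  cases ε <;> obtain ⟨h₁, h₂⟩ := h <;> linarith

lemma dcell_subset_Ico (ha : 0 ≤ a) (hb : b ≤ 1) : dcell ε a b ⊆ Ico 0 1 := by
  cases ε <;> rintro u ⟨h₁, h₂⟩ <;> constructor <;> linarith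

lemma eq_of_mem_dcell (hb : b ≤ 1) (hb' : b' ≤ 1) (h : u ∈ dcell ε a b) (h' : u ∈ dcell ε' a' b') :
    ε = ε' := by
  cases ε <;> cases ε' <;> first | rfl | (obtain ⟨h₁, h₂⟩ := h; obtain ⟨h₁', h₂'⟩ := h'; linarith)

lemma notMem_dcell_of_le (hba : b ≤ a') (h : u ∈ dcell ε a b) : u ∉ dcell ε a' b' := by
  cases ε <;> rintro ⟨h₁', h₂'⟩ <;> obtain ⟨h₁, h₂⟩ := h <;> linarith

lemma mem_dcell_max_min (h : u ∈ dcell ε a b) (h' : u ∈ dcell ε a' b') :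
    u ∈ dcell ε (max a a') (min b b') := by
  cases ε <;> obtain ⟨h₁, h₂⟩ := h <;> obtain ⟨h₁', h₂'⟩ := h' <;> constructor <;>
    rcases le_total a a' with hm | hm <;> rcases le_total b b' with hm' | hm' <;>
    simp only [max_eq_left, max_eq_right, min_eq_left, min_eq_right, hm, hm'] <;> linarith

variable {n : ℕ} {g : Fin (n + 1) → ℝ}

def pcell (g : Fin (n + 1) → ℝ) (ε : Bool) (i : Fin n) : Set ℝ := dcell ε (g i.castSucc) (g i.succ)

lemma exists_mem_pcell (h0 : g 0 = 0) (h1 : g (Fin.last n) = 1) (hu : u ∈ Ico (0 : ℝ) 1) :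
    ∃ ε i, u ∈ pcell g ε i := by
  rcases lt_or_ge u (1 / 2) with hu' | hu'
  · obtain ⟨i, hi, hi'⟩ := Fin.exists_castSucc_and_not_succ (fun k => g k ≤ 2 * u)
      (by simp [h0, hu.1]) (by simp only [h1, not_le]; linarith)
    exact ⟨true, i, by constructor <;> simp only [not_le] at hi' <;> linarith⟩
  · obtain ⟨i, hi, hi'⟩ := Fin.exists_castSucc_and_not_succ (fun k => g k < 2 - 2 * u)
      (by simp only [h0]; linarith [hu.2]) (by simp only [h1, not_lt]; linarith)
    exact ⟨false, i, by constructor <;> simp only [not_lt] at hi' <;> linarith⟩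

lemma eq_of_mem_pcell (hg : Monotone g) (hle : ∀ k, g k ≤ 1) {ε ε' : Bool} {i j : Fin n}
    (hi : u ∈ pcell g ε i) (hj : u ∈ pcell g ε' j) : ε = ε' ∧ i = j := by
  obtain rfl := eq_of_mem_dcell (hle _) (hle _) hi hj
  refine ⟨rfl, ?_⟩
  by_contra hij
  rcases lt_or_gt_of_ne hij with h | h
  · exact notMem_dcell_of_le (hg (Fin.succ_le_castSucc_iff.2 h)) hi hj
  · exact notMem_dcell_of_le (hg (Fin.succ_le_castSucc_iff.2 h)) hj hi

lemma pcell_subset_Ico (hg : ∀ k, g k ∈ Icc (0 : ℝ) 1) (ε : Bool) (i : Fin n) :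
    pcell g ε i ⊆ Ico 0 1 :=
  dcell_subset_Ico (hg _).1 (hg _).2

end DoubledCells

section IntervalExchange

variable {n : ℕ} (x y : Fin (n + 1) → ℝ) (σ : Equiv.Perm (Fin n)) (o : ℕ → ℝ) (ω : Fin n → Bool)

-- In `freqBelow o` coordinates the branch `i` acts as `s ↦ branchConst i + s` if `ω i`
-- and as `s ↦ branchConst i - s` otherwise.
noncomputable def branchConst (i : Fin n) : ℝ :=
  cond (ω i) (freqBelow o (y (σ i).castSucc) - freqBelow o (x i.castSucc))
    (freqBelow o (y (σ i).castSucc) + freqBelow o (x i.succ))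

open Classical in
noncomputable def ietMap (u : ℝ) : ℝ :=
  if h : ∃ c : Bool × Fin n, u ∈ pcell (freqBelow o ∘ x) c.1 c.2 then
    u + dshift (ω h.choose.2) h.choose.1 (branchConst x y σ o ω h.choose.2)
  else u

def codingSet (i : Fin n) : Set ℝ :=
  pcell (freqBelow o ∘ x) true i ∪ pcell (freqBelow o ∘ x) false i

variable {x y σ o ω}

lemma monotone_freqBelow_comp (hx : StrictMono x) : Monotone (freqBelow o ∘ x) :=
  freqBelow_mono.comp hx.monotone

lemma ietMap_of_mem_pcell (hx : StrictMono x) {u : ℝ} {ε : Bool} {i : Fin n}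
    (hu : u ∈ pcell (freqBelow o ∘ x) ε i) :
    ietMap x y σ o ω u = u + dshift (ω i) ε (branchConst x y σ o ω i) := by
  have h : ∃ c : Bool × Fin n, u ∈ pcell (freqBelow o ∘ x) c.1 c.2 := ⟨(ε, i), hu⟩
  obtain ⟨hε, hi⟩ := eq_of_mem_pcell (monotone_freqBelow_comp hx)
    (fun k => (freqBelow_mem_Icc _).2) h.choose_spec hu
  rw [ietMap, dif_pos h, hε, hi]

lemma exists_mem_pcell_freqBelow {f : Fin (n + 1) → ℝ} (hf : Monotone f)
    (hfo : ∀ m, ∃ i, o (m + 1) ∈ piece f i) {u : ℝ} (hu : u ∈ Ico (0 : ℝ) 1) :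
    ∃ ε i, u ∈ pcell (freqBelow o ∘ f) ε i :=
  exists_mem_pcell (g := freqBelow o ∘ f) (freqBelow_partition_zero hf hfo)
    (freqBelow_partition_last hf hfo) hu

lemma existsUnique_mem_codingSet (hx : StrictMono x) (horb : ∀ m, ∃ i, o m ∈ piece x i) {u : ℝ}
    (hu : u ∈ Ico (0 : ℝ) 1) :
    ∃! i, u ∈ codingSet x o i := by
  obtain ⟨ε, i, hi⟩ := exists_mem_pcell_freqBelow hx.monotone (fun m => horb (m + 1)) hu
  refine ⟨i, by cases ε <;> simp [codingSet, hi], fun j hj => ?_⟩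
  rcases hj with hj | hj <;> exact (eq_of_mem_pcell (monotone_freqBelow_comp hx)
    (fun k => (freqBelow_mem_Icc _).2) hj hi).2

variable {T : ℝ → ℝ} (hx : StrictMono x) (hy : StrictMono y)
  (hT : ∀ i, BijOn T (piece x i) (piece y (σ i)))
  (hstep : ∀ m, o (m + 1) = T (o m)) (horb : ∀ m, ∃ i, o m ∈ piece x i)
include hx hy hT hstep horb

lemma mem_pcell_iff_add_dshift {u : ℝ} {ε : Bool} {i : Fin n} :
    u + dshift (ω i) ε (branchConst x y σ o ω i) ∈
        pcell (freqBelow o ∘ y) (cond (ω i) ε (!ε)) (σ i) ↔ u ∈ pcell (freqBelow o ∘ x) ε i := by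
  have hsub := freqBelow_piece_sub hx hy hT hstep horb i
  unfold pcell
  rw [← add_dshift_mem_dcell_iff (ω i) ε (branchConst x y σ o ω i)]
  unfold branchConst
  cases ω i <;> simp only [Function.comp_apply, cond] <;> congr! 2 <;> linarith

lemma ietMap_mem_pcell {u : ℝ} {ε : Bool} {i : Fin n} (hu : u ∈ pcell (freqBelow o ∘ x) ε i) :
    ietMap x y σ o ω u ∈ pcell (freqBelow o ∘ y) (cond (ω i) ε (!ε)) (σ i) := by
  rw [ietMap_of_mem_pcell hx hu]
  exact (mem_pcell_iff_add_dshift hx hy hT hstep horb).2 hu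

lemma ietMap_mapsTo : MapsTo (ietMap x y σ o ω) (Ico 0 1) (Ico 0 1) := fun u hu => by
  obtain ⟨ε, i, hi⟩ := exists_mem_pcell_freqBelow hx.monotone (fun m => horb (m + 1)) hu
  exact pcell_subset_Ico (fun _ => freqBelow_mem_Icc _) _ _
    (ietMap_mem_pcell hx hy hT hstep horb hi)

lemma ietMap_injOn : InjOn (ietMap x y σ o ω) (Ico 0 1) := by
  intro u hu u' hu' huu'
  obtain ⟨ε, i, hi⟩ := exists_mem_pcell_freqBelow hx.monotone (fun m => horb (m + 1)) hu
  obtain ⟨ε', i', hi'⟩ := exists_mem_pcell_freqBelow hx.monotone (fun m => horb (m + 1)) hu'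
  have himg := ietMap_mem_pcell (ω := ω) hx hy hT hstep horb hi
  rw [huu'] at himg
  obtain ⟨hεε', hii'⟩ := eq_of_mem_pcell (monotone_freqBelow_comp hy)
    (fun k => (freqBelow_mem_Icc _).2) himg (ietMap_mem_pcell hx hy hT hstep horb hi')
  obtain rfl := σ.injective hii'
  obtain rfl : ε = ε' := by revert hεε'; cases ω i <;> cases ε <;> cases ε' <;> decide
  rw [ietMap_of_mem_pcell hx hi, ietMap_of_mem_pcell hx hi'] at huu'
  exact add_right_cancel huu'

lemma ietMap_surjOn : SurjOn (ietMap x y σ o ω) (Ico 0 1) (Ico 0 1) := by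
  intro w hw
  obtain ⟨δ, j, hj⟩ := exists_mem_pcell_freqBelow hy.monotone (succ_mem_piece_y hT hstep horb) hw
  set i := σ.symm j
  set ε := cond (ω i) δ (!δ)
  set u := w - dshift (ω i) ε (branchConst x y σ o ω i)
  have hδ : cond (ω i) ε (!ε) = δ := by simp only [ε]; cases ω i <;> cases δ <;> rfl
  have hu : u ∈ pcell (freqBelow o ∘ x) ε i := by
    rw [← mem_pcell_iff_add_dshift hx hy hT hstep horb, sub_add_cancel, Equiv.apply_symm_apply, hδ]
    exact hj
  refine ⟨u, pcell_subset_Ico (fun _ => freqBelow_mem_Icc _) _ _ hu, ?_⟩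
  rw [ietMap_of_mem_pcell hx hu, sub_add_cancel]

lemma ietMap_bijOn : BijOn (ietMap x y σ o ω) (Ico 0 1) (Ico 0 1) :=
  ⟨ietMap_mapsTo hx hy hT hstep horb, ietMap_injOn hx hy hT hstep horb,
    ietMap_surjOn hx hy hT hstep horb⟩

lemma exists_Icc_of_ietMap_mem_dcell {i : Fin n} {ε δ : Bool} {u α' β' : ℝ}
    (hε : u ∈ pcell (freqBelow o ∘ x) ε i) (hα' : visitFreq o {α'} = 0)
    (hβ' : visitFreq o {β'} = 0)
    (hSu : ietMap x y σ o ω u ∈ dcell δ (freqBelow o α') (freqBelow o β')) :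
    ∃ A B, A ∈ Icc (y (σ i).castSucc) (y (σ i).succ) ∧ B ∈ Icc (y (σ i).castSucc) (y (σ i).succ) ∧
      visitFreq o {A} = 0 ∧ visitFreq o {B} = 0 ∧ α' ≤ A ∧ B ≤ β' ∧
      u + dshift (ω i) ε (branchConst x y σ o ω i) ∈
        dcell (cond (ω i) ε (!ε)) (freqBelow o A) (freqBelow o B) := by
  have hSu' := ietMap_mem_pcell (ω := ω) hx hy hT hstep horb hε
  obtain rfl := eq_of_mem_dcell (freqBelow_mem_Icc _).2 (freqBelow_mem_Icc _).2 hSu hSu'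
  set A := max α' (y (σ i).castSucc)
  set B := min β' (y (σ i).succ)
  have hAB : ietMap x y σ o ω u ∈ dcell (cond (ω i) ε (!ε)) (freqBelow o A) (freqBelow o B) := by
    rw [freqBelow_mono.map_max, freqBelow_mono.map_min]
    exact mem_dcell_max_min hSu hSu'
  have hle : A ≤ B := le_of_not_gt fun h => (lt_of_mem_dcell hAB).not_ge (freqBelow_mono h.le)
  have hy₀ := visitFreq_singleton_y hy hT hstep horb
  refine ⟨A, B, ⟨le_max_right _ _, hle.trans (min_le_right _ _)⟩,
    ⟨(le_max_right _ _).trans hle, min_le_right _ _⟩, ?_, ?_, le_max_left _ _, min_le_left _ _,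
    ietMap_of_mem_pcell hx hε ▸ hAB⟩
  · rcases max_choice α' (y (σ i).castSucc) with h | h <;> rw [show A = _ from h]
    exacts [hα', hy₀ _]
  · rcases min_choice β' (y (σ i).succ) with h | h <;> rw [show B = _ from h]
    exacts [hβ', hy₀ _]

end IntervalExchange

section Itinerary

variable {n : ℕ} {x y : Fin (n + 1) → ℝ} {σ : Equiv.Perm (Fin n)} {o : ℕ → ℝ} {ω : Fin n → Bool}
  {T : ℝ → ℝ} (hx : StrictMono x) (hy : StrictMono y)
  (hT : ∀ i, BijOn T (piece x i) (piece y (σ i)))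
  (hstep : ∀ m, o (m + 1) = T (o m)) (horb : ∀ m, ∃ i, o m ∈ piece x i)
  (hω : ∀ i, cond (ω i) (StrictMonoOn T (piece x i)) (StrictAntiOn T (piece x i)))
include hx hy hT hstep horb hω

lemma exists_Ioo_of_add_dshift_mem_dcell {i : Fin n} {ε : Bool} {u A B : ℝ}
    (hA : A ∈ Icc (y (σ i).castSucc) (y (σ i).succ))
    (hB : B ∈ Icc (y (σ i).castSucc) (y (σ i).succ))
    (hA₀ : visitFreq o {A} = 0) (hB₀ : visitFreq o {B} = 0)
    (hu : u + dshift (ω i) ε (branchConst x y σ o ω i) ∈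
      dcell (cond (ω i) ε (!ε)) (freqBelow o A) (freqBelow o B)) :
    ∃ α β, visitFreq o {α} = 0 ∧ visitFreq o {β} = 0 ∧
      (∀ z ∈ Ioo α β, z ∈ piece x i ∧ T z ∈ Ioo A B) ∧
      u ∈ dcell ε (freqBelow o α) (freqBelow o β) := by
  have hωi := hω i
  unfold branchConst at hu
  cases hc : ω i <;> rw [hc] at hωi hu
  · obtain ⟨α, hα, hα₀, hGα, hcutα⟩ :=
      exists_pullback_of_strictAntiOn hx hy hT hstep horb hωi hA hA₀
    obtain ⟨β, hβ, hβ₀, hGβ, hcutβ⟩ :=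
      exists_pullback_of_strictAntiOn hx hy hT hstep horb hωi hB hB₀
    refine ⟨β, α, hβ₀, hα₀, fun z hz => ?_, ?_⟩
    · have hz' : z ∈ piece x i := ⟨hβ.1.trans_lt hz.1, hz.2.trans_le hα.2⟩
      exact ⟨hz', (hcutα z hz').1 hz.2, (hcutβ z hz').2 hz.1⟩
    · rw [← add_dshift_mem_dcell_iff false]
      convert hu using 2 <;> simp only [cond] <;> linarith
  · obtain ⟨α, hα, hα₀, hGα, hcutα⟩ :=
      exists_pullback_of_strictMonoOn hx hy hT hstep horb hωi hA hA₀
    obtain ⟨β, hβ, hβ₀, hGβ, hcutβ⟩ :=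
      exists_pullback_of_strictMonoOn hx hy hT hstep horb hωi hB hB₀
    refine ⟨α, β, hα₀, hβ₀, fun z hz => ?_, ?_⟩
    · have hz' : z ∈ piece x i := ⟨hα.1.trans_lt hz.1, hz.2.trans_le hβ.2⟩
      exact ⟨hz', (hcutα z hz').2 hz.1, (hcutβ z hz').1 hz.2⟩
    · rw [← add_dshift_mem_dcell_iff true]
      convert hu using 2 <;> simp only [cond] <;> linarith

lemma exists_Ioo_of_followsItinerary (v : List (Fin n)) {u : ℝ} (hu : u ∈ Ico (0 : ℝ) 1)
    (hv : FollowsItinerary (ietMap x y σ o ω) (codingSet x o) v u) :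
    ∃ α β, visitFreq o {α} = 0 ∧ visitFreq o {β} = 0 ∧
      (∀ z ∈ Ioo α β, FollowsItinerary T (piece x) v z) ∧
      ∃ ε, u ∈ dcell ε (freqBelow o α) (freqBelow o β) := by
  induction v generalizing u with
  | nil =>
    have hx₀ := visitFreq_singleton_partition hx.monotone fun m => horb (m + 1)
    refine ⟨x 0, x (Fin.last n), hx₀ _, hx₀ _, fun _ _ => trivial, ?_⟩
    rw [freqBelow_partition_zero hx.monotone fun m => horb (m + 1),
      freqBelow_partition_last hx.monotone fun m => horb (m + 1)]
    rcases lt_or_ge u (1 / 2) with h | h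
    exacts [⟨true, by constructor <;> linarith [hu.1]⟩, ⟨false, by constructor <;> linarith [hu.2]⟩]
  | cons i v ih =>
    obtain ⟨hui, hv⟩ := hv
    obtain ⟨α', β', hα', hβ', hz', δ, hSu⟩ := ih (ietMap_mapsTo hx hy hT hstep horb hu) hv
    obtain ⟨ε, hε⟩ : ∃ ε, u ∈ pcell (freqBelow o ∘ x) ε i := by
      rcases hui with h | h
      exacts [⟨_, h⟩, ⟨_, h⟩]
    obtain ⟨A, B, hA, hB, hA₀, hB₀, hα'A, hBβ', hAB⟩ :=
      exists_Icc_of_ietMap_mem_dcell hx hy hT hstep horb hε hα' hβ' hSu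
    obtain ⟨α, β, hα, hβ, hz, huε⟩ :=
      exists_Ioo_of_add_dshift_mem_dcell hx hy hT hstep horb hω hA hB hA₀ hB₀ hAB
    refine ⟨α, β, hα, hβ, fun z hzαβ => ⟨(hz z hzαβ).1, hz' _ ?_⟩, ε, huε⟩
    exact Ioo_subset_Ioo hα'A hBβ' (hz z hzαβ).2

lemma factors_subset_of_coding {W W' : ℕ → Fin n} (hW : ∀ m i, W m = i ↔ o m ∈ piece x i)
    (hW' : ∀ m i, W' m = i ↔ (ietMap x y σ o ω)^[m] 0 ∈ codingSet x o i) :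
    Factors W' ⊆ Factors W := by
  intro v hv
  obtain ⟨m, hm⟩ := (isFactor_iff_exists_followsItinerary hW' v).1 hv
  obtain ⟨α, β, hα, -, hαβ, ε, hu⟩ := exists_Ioo_of_followsItinerary hx hy hT hstep horb hω v
    ((ietMap_mapsTo hx hy hT hstep horb).iterate m ⟨le_rfl, one_pos⟩) hm
  obtain ⟨m', hm'⟩ := exists_mem_Ioo_of_freqBelow_lt hα (lt_of_mem_dcell hu)
  have horbit : ∀ m, o m = T^[m] (o 0) := fun m => by
    induction m with
    | zero => rfl
    | succ m ih => rw [hstep, ih, Function.iterate_succ_apply']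
  refine (isFactor_iff_exists_followsItinerary (fun m i => horbit m ▸ hW m i) v).2 ⟨m', ?_⟩
  exact horbit m' ▸ hαβ _ hm'

end Itinerary

lemma exists_strictMono_enum_of_finset {B : Finset ℝ} (h0 : 0 ∈ B) (h1 : 1 ∈ B)
    (hB : ∀ r ∈ B, r ∈ Icc (0 : ℝ) 1) :
    ∃ (k : ℕ) (b : Fin (k + 1) → ℝ), StrictMono b ∧ b 0 = 0 ∧ b (Fin.last k) = 1 ∧
      ∀ j : Fin k, ∀ r ∈ B, b j.castSucc < r → b j.succ ≤ r := by
  obtain ⟨k, hk⟩ : ∃ k, B.card = k + 1 := Nat.exists_eq_add_one.2 (Finset.card_pos.2 ⟨0, h0⟩)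
  set b := B.orderEmbOfFin hk
  have hsurj : ∀ r ∈ B, ∃ j, b j = r := fun r hr =>
    (Finset.range_orderEmbOfFin B hk).symm ▸ (Finset.mem_coe.2 hr) |>.imp fun _ => id
  refine ⟨k, b, b.strictMono, ?_, ?_, fun j r hr hjr => ?_⟩
  · obtain ⟨j, hj⟩ := hsurj 0 h0
    exact le_antisymm (hj ▸ b.monotone (Fin.zero_le j)) (hB _ (B.orderEmbOfFin_mem hk 0)).1
  · obtain ⟨j, hj⟩ := hsurj 1 h1
    exact le_antisymm (hB _ (B.orderEmbOfFin_mem hk _)).2 (hj ▸ b.monotone (Fin.le_last j))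
  · obtain ⟨j', rfl⟩ := hsurj r hr
    exact b.monotone (Fin.castSucc_lt_iff_succ_le.1 (b.lt_iff_lt.1 hjr))

section TranslationPartition

variable {n : ℕ} {x : Fin (n + 1) → ℝ} {o : ℕ → ℝ} (y : Fin (n + 1) → ℝ) (σ : Equiv.Perm (Fin n))
  (ω : Fin n → Bool)

-- The breakpoints are the endpoints of all cells `pcell (freqBelow o ∘ x) ε i`.
lemma exists_ietMap_translation_partition (hx : StrictMono x)
    (horb : ∀ m, ∃ i, o m ∈ piece x i) :
    ∃ (k : ℕ) (b : Fin (k + 1) → ℝ), StrictMono b ∧ b 0 = 0 ∧ b (Fin.last k) = 1 ∧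
      ∀ j : Fin k, ∃ c, ∀ z ∈ Ico (b j.castSucc) (b j.succ), ietMap x y σ o ω z = z + c := by
  classical
  set G := freqBelow o ∘ x
  have hG0 : G 0 = 0 := freqBelow_partition_zero hx.monotone fun m => horb (m + 1)
  set B := (Finset.univ.image fun j => G j / 2) ∪ Finset.univ.image fun j => 1 - G j / 2
  have hB : ∀ r ∈ B, r ∈ Icc (0 : ℝ) 1 := by
    intro r hr
    have hG : ∀ j, G j ∈ Icc (0 : ℝ) 1 := fun j => freqBelow_mem_Icc _
    simp only [B, Finset.mem_union, Finset.mem_image, Finset.mem_univ, true_and] at hr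
    rcases hr with ⟨j, rfl⟩ | ⟨j, rfl⟩ <;> constructor <;> linarith [(hG j).1, (hG j).2]
  obtain ⟨k, b, hb, hb0, hb1, hbB⟩ := exists_strictMono_enum_of_finset
    (Finset.mem_union_left _ (Finset.mem_image.2 ⟨0, Finset.mem_univ _, by simp [hG0]⟩))
    (Finset.mem_union_right _ (Finset.mem_image.2 ⟨0, Finset.mem_univ _, by simp [hG0]⟩)) hB
  refine ⟨k, b, hb, hb0, hb1, fun j => ?_⟩
  have hj : b j.castSucc ∈ Ico (0 : ℝ) 1 :=
    ⟨hb0 ▸ hb.monotone (Fin.zero_le _), hb1 ▸ hb (Fin.castSucc_lt_last j)⟩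
  obtain ⟨ε, i, hi⟩ := exists_mem_pcell_freqBelow hx.monotone (fun m => horb (m + 1)) hj
  refine ⟨dshift (ω i) ε (branchConst x y σ o ω i), fun z hz => ietMap_of_mem_pcell hx ?_⟩
  cases ε
  · have := hbB j _ (Finset.mem_union_right _ (Finset.mem_image.2 ⟨_, Finset.mem_univ _, rfl⟩)) hi.2
    exact ⟨hi.1.trans hz.1, hz.2.trans_le this⟩
  · have := hbB j _ (Finset.mem_union_left _ (Finset.mem_image.2 ⟨_, Finset.mem_univ _, rfl⟩)) hi.2
    exact ⟨hi.1.trans hz.1, hz.2.trans_le this⟩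

end TranslationPartition

lemma exists_orientation {ι : Type*} {T : ℝ → ℝ} {s : ι → Set ℝ}
    (h : ∀ i, StrictMonoOn T (s i) ∨ StrictAntiOn T (s i)) :
    ∃ ω : ι → Bool, ∀ i, cond (ω i) (StrictMonoOn T (s i)) (StrictAntiOn T (s i)) := by
  classical
  refine ⟨fun i => decide (StrictMonoOn T (s i)), fun i => ?_⟩
  by_cases hi : StrictMonoOn T (s i)
  · simp [hi]
  · simpa [hi] using (h i).resolve_left hi

theorem piecewiseContinuous_word_equiv_iet_word_general (n : ℕ)
    (x y : Fin (n + 1) → ℝ)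
    (hx : StrictMono x)
    (hy : StrictMono y)
    (σ : Equiv.Perm (Fin n)) (T : ℝ → ℝ)
    (hT : ∀ i : Fin n,
      Set.BijOn T (Set.Ioo (x i.castSucc) (x i.succ))
        (Set.Ioo (y (σ i).castSucc) (y (σ i).succ)) ∧
      ContinuousOn T (Set.Ioo (x i.castSucc) (x i.succ)) ∧
      (StrictMonoOn T (Set.Ioo (x i.castSucc) (x i.succ)) ∨
       StrictAntiOn T (Set.Ioo (x i.castSucc) (x i.succ))))
    (W : ℕ → Fin n) (hUR : UniformlyRecurrent W)
    (p : ℝ)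
    (hW : ∀ (m : ℕ) (i : Fin n),
      W m = i ↔ T^[m] p ∈ Set.Ioo (x i.castSucc) (x i.succ)) :
    ∃ W' : ℕ → Fin n, Factors W' = Factors W ∧
      ∃ (k : ℕ) (b : Fin (k + 1) → ℝ),
        StrictMono b ∧ b 0 = 0 ∧ b (Fin.last k) = 1 ∧
        ∃ (S : ℝ → ℝ) (c : Fin k → ℝ),
          Set.BijOn S (Set.Ico (0 : ℝ) 1) (Set.Ico (0 : ℝ) 1) ∧
          (∀ i : Fin k,
            (∀ z ∈ Set.Ico (b i.castSucc) (b i.succ), S z = z + c i) ∨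
            (∀ z ∈ Set.Ico (b i.castSucc) (b i.succ), S z = c i - z)) ∧
          ∃ V : Fin n → Set ℝ,
            (∀ z ∈ Set.Ico (0 : ℝ) 1, ∃! i : Fin n, z ∈ V i) ∧
            (∀ i : Fin n, V i ⊆ Set.Ico (0 : ℝ) 1) ∧
            (∀ i : Fin n, ∃ Sf : Finset (Set ℝ),
              (∀ I ∈ Sf, Set.OrdConnected I) ∧ V i = ⋃₀ ↑Sf) ∧
            ∃ q ∈ Set.Ico (0 : ℝ) 1,
              ∀ (m : ℕ) (i : Fin n), W' m = i ↔ S^[m] q ∈ V i := by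
  set o : ℕ → ℝ := fun m => T^[m] p
  have hstep : ∀ m, o (m + 1) = T (o m) := fun m => Function.iterate_succ_apply' T m p
  have horb : ∀ m, ∃ i, o m ∈ piece x i := fun m => ⟨W m, (hW m _).1 rfl⟩
  have hbij : ∀ i, BijOn T (piece x i) (piece y (σ i)) := fun i => (hT i).1
  obtain ⟨ω, hω⟩ := exists_orientation fun i => (hT i).2.2
  have h0 : (0 : ℝ) ∈ Ico (0 : ℝ) 1 := ⟨le_rfl, one_pos⟩
  have hV := fun z (hz : z ∈ Ico (0 : ℝ) 1) => existsUnique_mem_codingSet hx horb hz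
  obtain ⟨W', hW'⟩ := exists_coding (ietMap_mapsTo (ω := ω) hx hy hbij hstep horb) h0 hV
  obtain ⟨k, b, hb, hb0, hb1, hc⟩ := exists_ietMap_translation_partition y σ ω hx horb
  choose c hc using hc
  have hcell := pcell_subset_Ico (g := freqBelow o ∘ x) fun _ => freqBelow_mem_Icc _
  refine ⟨W', factors_eq_of_subset hUR (factors_subset_of_coding hx hy hbij hstep horb hω hW hW'),
    k, b, hb, hb0, hb1, _, c, ietMap_bijOn hx hy hbij hstep horb, fun j => Or.inl (hc j),
    codingSet x o, hV, fun i => union_subset (hcell _ _) (hcell _ _),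
    fun i => ⟨{pcell (freqBelow o ∘ x) true i, pcell (freqBelow o ∘ x) false i}, ?_,
      by simp [codingSet]⟩, 0, h0, hW'⟩
  simp only [Finset.mem_insert, Finset.mem_singleton]
  rintro I (rfl | rfl) <;> exact ordConnected_Ico

/-- If a uniformly recurrent word `W` is the evolution of a point, avoiding all
partition points, under a piecewise-continuous transformation of `[0,1]`, then
there is a word `W'` equivalent to `W` (same factors) generated by an interval
exchange transformation of `[0,1)` with characteristic sets that are finite
unions of intervals. -/
theorem piecewiseContinuous_word_equiv_iet_word (n : ℕ)
    (x y : Fin (n + 1) → ℝ)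
    (hx : StrictMono x) (hx0 : x 0 = 0) (hx1 : x (Fin.last n) = 1)
    (hy : StrictMono y) (hy0 : y 0 = 0) (hy1 : y (Fin.last n) = 1)
    (σ : Equiv.Perm (Fin n)) (T : ℝ → ℝ)
    (hmaps : Set.MapsTo T (Set.Icc (0 : ℝ) 1) (Set.Icc (0 : ℝ) 1))
    (hT : ∀ i : Fin n,
      Set.BijOn T (Set.Ioo (x i.castSucc) (x i.succ))
        (Set.Ioo (y (σ i).castSucc) (y (σ i).succ)) ∧
      ContinuousOn T (Set.Ioo (x i.castSucc) (x i.succ)) ∧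
      (StrictMonoOn T (Set.Ioo (x i.castSucc) (x i.succ)) ∨
       StrictAntiOn T (Set.Ioo (x i.castSucc) (x i.succ))))
    (W : ℕ → Fin n) (hUR : UniformlyRecurrent W)
    (p : ℝ) (hp : p ∈ Set.Icc (0 : ℝ) 1)
    (hW : ∀ (m : ℕ) (i : Fin n),
      W m = i ↔ T^[m] p ∈ Set.Ioo (x i.castSucc) (x i.succ)) :
    ∃ W' : ℕ → Fin n, Factors W' = Factors W ∧
      ∃ (k : ℕ) (b : Fin (k + 1) → ℝ),
        StrictMono b ∧ b 0 = 0 ∧ b (Fin.last k) = 1 ∧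
        ∃ (S : ℝ → ℝ) (c : Fin k → ℝ),
          Set.BijOn S (Set.Ico (0 : ℝ) 1) (Set.Ico (0 : ℝ) 1) ∧
          (∀ i : Fin k,
            (∀ z ∈ Set.Ico (b i.castSucc) (b i.succ), S z = z + c i) ∨
            (∀ z ∈ Set.Ico (b i.castSucc) (b i.succ), S z = c i - z)) ∧
          ∃ V : Fin n → Set ℝ,
            (∀ z ∈ Set.Ico (0 : ℝ) 1, ∃! i : Fin n, z ∈ V i) ∧
            (∀ i : Fin n, V i ⊆ Set.Ico (0 : ℝ) 1) ∧
            (∀ i : Fin n, ∃ Sf : Finset (Set ℝ),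
              (∀ I ∈ Sf, Set.OrdConnected I) ∧ V i = ⋃₀ ↑Sf) ∧
            ∃ q ∈ Set.Ico (0 : ℝ) 1,
              ∀ (m : ℕ) (i : Fin n), W' m = i ↔ S^[m] q ∈ V i :=
  piecewiseContinuous_word_equiv_iet_word_general n x y hx hy σ T hT W hUR p hW
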